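/- arXiv:1703.07687 — 2 statements merged into one kernel-verified Lean document; each statement's English description precedes it below -/
import Mathlib

section
/- Let φ be a smooth function on an open set U ⊂ R², ε = ±1, and suppose smooth functions A = K¹_{12}, B = K²_{21} on U satisfy B_1 = εA_2 + εφ_2 A − φ_1 B and A_1 = −B_2 − φ_1 A − φ_2 B. Then L = εA² + B² satisfies L_1 = 2(εl_2 B² − φ_1 L) wherever B ≠ 0, where l = A/B; consequently L_1/(2L) = l_2/(l² + ε) − φ_1 wherever L ≠ 0 and B ≠ 0. -/
noncomputable section

/-- Partial derivative `∂_i f` in the standard chart of `ℝ²` (indices `0,1` for `1,2`). -/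
def pd (i : Fin 2) (f : (Fin 2 → ℝ) → ℝ) (x : Fin 2 → ℝ) : ℝ :=
  fderiv ℝ f x (Pi.single i 1)

/-- If smooth functions `A = K¹₁₂`, `B = K²₂₁` satisfy
`B₁ = εA₂ + εφ₂A − φ₁B` and `A₁ = −B₂ − φ₁A − φ₂B`, then `L = εA² + B²` satisfies
`L₁ = 2(ε l₂ B² − φ₁ L)` wherever `B ≠ 0` (with `l = A/B`); consequently
`L₁/(2L) = l₂/(l² + ε) − φ₁` wherever `L ≠ 0` and `B ≠ 0`. -/
theorem stmt12 (ε : ℝ) (hε : ε = 1 ∨ ε = -1)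
    (φ A B : (Fin 2 → ℝ) → ℝ)
    (hφ : ContDiff ℝ (⊤ : ℕ∞) φ) (hA : ContDiff ℝ (⊤ : ℕ∞) A) (hB : ContDiff ℝ (⊤ : ℕ∞) B)
    (hB1 : ∀ x, pd 0 B x = ε * pd 1 A x + ε * pd 1 φ x * A x - pd 0 φ x * B x)
    (hA1 : ∀ x, pd 0 A x = -pd 1 B x - pd 0 φ x * A x - pd 1 φ x * B x)
    (L l : (Fin 2 → ℝ) → ℝ)
    (hL : ∀ x, L x = ε * (A x) ^ 2 + (B x) ^ 2)
    (hl : ∀ x, l x = A x / B x) :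
    ∀ x, B x ≠ 0 →
      pd 0 L x = 2 * (ε * pd 1 l x * (B x) ^ 2 - pd 0 φ x * L x) ∧
      (L x ≠ 0 → pd 0 L x / (2 * L x) = pd 1 l x / ((l x) ^ 2 + ε) - pd 0 φ x) := by
  have hε0 : ε ≠ 0 := by rcases hε with h | h <;> simp [h]
  have hε2 : ε ^ 2 = 1 := by rcases hε with h | h <;> norm_num [h]
  have hdA : Differentiable ℝ A := hA.differentiable (by simp)
  have hdB : Differentiable ℝ B := hB.differentiable (by simp)
  have hLfun : L = fun x => ε * (A x * A x) + B x * B x :=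
    funext fun x => by rw [hL]; ring
  have hlfun : l = fun x => A x * (B x)⁻¹ :=
    funext fun x => by rw [hl, div_eq_mul_inv]
  intro x hBx
  have hpdL : pd 0 L x = 2 * ε * A x * pd 0 A x + 2 * B x * pd 0 B x := by
    rw [hLfun]
    unfold pd
    rw [(show HasFDerivAt (fun x => ε * (A x * A x) + B x * B x) _ x from (((hdA x).hasFDerivAt.mul (hdA x).hasFDerivAt).const_mul ε).add
        ((hdB x).hasFDerivAt.mul (hdB x).hasFDerivAt)).fderiv]
    simp
    ring
  have hinv : HasFDerivAt (fun y => (B y)⁻¹)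
      ((-(ContinuousLinearMap.mulLeftRight ℝ ℝ (B x)⁻¹ (B x)⁻¹)).comp (fderiv ℝ B x)) x :=
    (hasFDerivAt_inv' hBx).comp x (hdB x).hasFDerivAt
  have hpdl : pd 1 l x = (pd 1 A x * B x - A x * pd 1 B x) / B x ^ 2 := by
    rw [hlfun]
    unfold pd
    rw [(show HasFDerivAt (fun x => A x * (B x)⁻¹) _ x from (hdA x).hasFDerivAt.mul hinv).fderiv]
    simp [ContinuousLinearMap.mulLeftRight_apply]
    field_simp
    ring
  have part1 : pd 0 L x = 2 * (ε * pd 1 l x * (B x) ^ 2 - pd 0 φ x * L x) := by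
    rw [hpdL, hA1, hB1, hpdl, hL]
    field_simp
    ring
  refine ⟨part1, fun hLx => ?_⟩
  have key : (l x) ^ 2 + ε = ε * L x / B x ^ 2 := by
    rw [hl, hL]
    field_simp
    linear_combination (-(A x) ^ 2) * hε2
  have hne : (l x) ^ 2 + ε ≠ 0 := by
    rw [key]
    exact div_ne_zero (mul_ne_zero hε0 hLx) (pow_ne_zero 2 hBx)
  rw [part1, key]
  field_simp
  linear_combination (pd 1 l x * B x ^ 2) * hε2
end
end

section
/- Let c, h be smooth functions on U ⊂ R² with h harmonic (h_{11} + h_{22} = 0) and suppose the metric e^c g_0 has constant Gaussian curvature δ2 where δ = ±1, i.e., −(c_{11}+c_{22})/(2e^c) = 2δ. Set φ = (h − c)/2 and g = e^φ g_0. Then the Gaussian curvature κ = −(φ_{11}+φ_{22})/(2e^φ) of g satisfies Δ ln|κ| = 6κ with λ = 0, where Δ is the Laplacian of g; in particular κ = −δ e^{h − 3φ} is nowhere zero. -/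
noncomputable section

/-- Flat Laplacian `Δ₀α = α₁₁ + α₂₂` (Euclidean case `ε = 1`). -/
def lap0 (f : (Fin 2 → ℝ) → ℝ) (x : Fin 2 → ℝ) : ℝ :=
  pd 0 (pd 0 f) x + pd 1 (pd 1 f) x

open Filter Topology Real

lemma pd_congr {f g : (Fin 2 → ℝ) → ℝ} {x} (h : f =ᶠ[nhds x] g) (i : Fin 2) :
    pd i f x = pd i g x := by
  simp only [pd, h.fderiv_eq]

lemma lap0_congr {f g : (Fin 2 → ℝ) → ℝ} {x} (h : f =ᶠ[nhds x] g) :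
    lap0 f x = lap0 g x := by
  have h1 : ∀ i, pd i f =ᶠ[nhds x] pd i g := fun i =>
    (h.fderiv (𝕜 := ℝ)).mono (fun y hy => by simp only [pd, hy])
  simp only [lap0]
  rw [pd_congr (h1 0) 0, pd_congr (h1 1) 1]

lemma pd_comb {a b : ℝ} {f g : (Fin 2 → ℝ) → ℝ} {x}
    (hf : DifferentiableAt ℝ f x) (hg : DifferentiableAt ℝ g x) (i : Fin 2) :
    pd i (fun y => a * f y + b * g y) x = a * pd i f x + b * pd i g x := by
  have : fderiv ℝ (fun y => a * f y + b * g y) x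
      = a • fderiv ℝ f x + b • fderiv ℝ g x := by
    rw [fderiv_fun_add (hf.const_mul a) (hg.const_mul b),
      fderiv_const_mul hf a, fderiv_const_mul hg b]
  simp [pd, this]

lemma contDiffOn_pd {f : (Fin 2 → ℝ) → ℝ} {U} (hU : IsOpen U)
    (hf : ContDiffOn ℝ (⊤ : ℕ∞) f U) (i : Fin 2) : ContDiffOn ℝ (⊤ : ℕ∞) (pd i f) U :=
  (hf.fderiv_of_isOpen hU (by simp)).clm_apply contDiffOn_const

lemma diffAt_of_contDiffOn {f : (Fin 2 → ℝ) → ℝ} {U x} (hU : IsOpen U)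
    (hf : ContDiffOn ℝ (⊤ : ℕ∞) f U) (hx : x ∈ U) : DifferentiableAt ℝ f x :=
  (hf.differentiableOn (by simp)).differentiableAt (hU.mem_nhds hx)

lemma lap0_comb {f g : (Fin 2 → ℝ) → ℝ} {U x} (hU : IsOpen U)
    (hf : ContDiffOn ℝ (⊤ : ℕ∞) f U) (hg : ContDiffOn ℝ (⊤ : ℕ∞) g U) (hx : x ∈ U) (a b : ℝ) :
    lap0 (fun y => a * f y + b * g y) x = a * lap0 f x + b * lap0 g x := by
  have key : ∀ i : Fin 2, pd i (fun y => a * f y + b * g y) =ᶠ[nhds x]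
      fun y => a * pd i f y + b * pd i g y :=
    fun i => eventuallyEq_of_mem (hU.mem_nhds hx)
      (fun y hy => pd_comb (diffAt_of_contDiffOn hU hf hy) (diffAt_of_contDiffOn hU hg hy) i)
  have h0 : ∀ i : Fin 2, pd i (pd i (fun y => a * f y + b * g y)) x
      = a * pd i (pd i f) x + b * pd i (pd i g) x := fun i => by
    rw [pd_congr (key i) i,
      pd_comb (diffAt_of_contDiffOn hU (contDiffOn_pd hU hf i) hx)
        (diffAt_of_contDiffOn hU (contDiffOn_pd hU hg i) hx) i]
  simp only [lap0, h0 0, h0 1]; ring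

/-- Let `h` be harmonic on `U ⊆ ℝ²` and `c` such that `e^c g₀` has
constant Gaussian curvature `2δ`, `δ = ±1` (i.e. `−Δ₀c/(2e^c) = 2δ`).  With
`φ = (h − c)/2` and `g = e^φ g₀`, the Gaussian curvature `κ = −Δ₀φ/(2e^φ)` of `g`
satisfies `κ = −δe^{h−3φ}` (in particular nowhere zero) and the Blaschke equation
`Δ ln|κ| = 6κ` with `λ = 0`, where `Δα = Δ₀α/e^φ` is the Laplacian of `g`. -/
theorem stmt17 (δ : ℝ) (hδ : δ = 1 ∨ δ = -1)
    (U : Set (Fin 2 → ℝ)) (hU : IsOpen U)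
    (c h : (Fin 2 → ℝ) → ℝ)
    (hc : ContDiffOn ℝ (⊤ : ℕ∞) c U) (hh : ContDiffOn ℝ (⊤ : ℕ∞) h U)
    (hharm : ∀ x ∈ U, lap0 h x = 0)
    (hcurvc : ∀ x ∈ U, -(lap0 c x) / (2 * Real.exp (c x)) = 2 * δ)
    (φ κ : (Fin 2 → ℝ) → ℝ)
    (hφ : ∀ x, φ x = (h x - c x) / 2)
    (hκ : ∀ x, κ x = -(lap0 φ x) / (2 * Real.exp (φ x))) :
    ∀ x ∈ U, κ x = -δ * Real.exp (h x - 3 * φ x) ∧ κ x ≠ 0 ∧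
      lap0 (fun y => Real.log (κ y)) x / Real.exp (φ x) = 6 * κ x := by
  -- curvature equation for c
  have hlapc : ∀ y ∈ U, lap0 c y = -4 * δ * Real.exp (c y) := by
    intro y hy
    have := hcurvc y hy
    have he := Real.exp_ne_zero (c y)
    field_simp at this
    linarith
  -- φ as a linear combination
  have hφfun : φ = fun y => (1/2 : ℝ) * h y + (-(1/2) : ℝ) * c y := by
    funext y; rw [hφ y]; ring
  -- Laplacian of φ on U
  have hlapφ : ∀ y ∈ U, lap0 φ y = 2 * δ * Real.exp (c y) := by
    intro y hy
    rw [hφfun, lap0_comb hU hh hc hy, hharm y hy, hlapc y hy]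
    ring
  -- κ on U
  have hκU : ∀ y ∈ U, κ y = -δ * Real.exp (c y - φ y) := by
    intro y hy
    rw [hκ y, hlapφ y hy, Real.exp_sub]
    have he := Real.exp_ne_zero (φ y)
    field_simp
  -- log κ on U
  have hlogκ : ∀ y ∈ U, Real.log (κ y) = (3/2 : ℝ) * c y + (-(1/2) : ℝ) * h y := by
    intro y hy
    have hcφ : c y - φ y = (3/2 : ℝ) * c y + (-(1/2) : ℝ) * h y := by rw [hφ y]; ring
    rw [hκU y hy]
    rcases hδ with hd | hd <;> rw [hd] <;>
      simp [Real.log_neg_eq_log, Real.log_exp, hcφ]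
  intro x hx
  have hκx : κ x = -δ * Real.exp (c x - φ x) := hκU x hx
  have hexpr : h x - 3 * φ x = c x - φ x := by rw [hφ x]; ring
  have hδne : -δ ≠ 0 := by rcases hδ with hd | hd <;> rw [hd] <;> norm_num
  refine ⟨by rw [hκx, hexpr], ?_, ?_⟩
  · rw [hκx]
    exact mul_ne_zero hδne (Real.exp_ne_zero _)
  · -- Laplacian of log κ
    have heq : (fun y => Real.log (κ y)) =ᶠ[nhds x]
        fun y => (3/2 : ℝ) * c y + (-(1/2) : ℝ) * h y :=
      eventuallyEq_of_mem (hU.mem_nhds hx) (fun y hy => hlogκ y hy)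
    rw [lap0_congr heq, lap0_comb hU hc hh hx, hharm x hx, hlapc x hx, hκx,
      Real.exp_sub]
    have he := Real.exp_ne_zero (φ x)
    field_simp
    ring
end
end
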